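/- arXiv:0802.1147 — 8 statements merged into one kernel-verified Lean document; each statement's English description precedes it below -/
import Mathlib

section
/- Let n be an odd prime, let m and h be integers, and set N = (m-h)^n + (m+h)^n. If n does not divide N, then there exists an integer t such that N = 2*m*(n*t + 1). -/
theorem rep_of_not_dvd (n : ℕ) (hn : n.Prime) (hodd : Odd n)
    (m h N : ℤ) (hN : N = (m - h) ^ n + (m + h) ^ n)
    (hndvd : ¬ (n : ℤ) ∣ N) :
    ∃ t : ℤ, N = 2 * m * (n * t + 1) := by
  haveI : Fact n.Prime := ⟨hn⟩
  -- 2m divides N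
  have hdvd : (m - h) + (m + h) ∣ N := hN ▸ hodd.add_dvd_pow_add_pow _ _
  have h2m : (2 * m) ∣ N := by
    have : (m - h) + (m + h) = 2 * m := by ring
    rwa [this] at hdvd
  obtain ⟨S, hS⟩ := h2m
  -- mod n, N ≡ 2m
  have hZ : ((N : ZMod n)) = 2 * (m : ZMod n) := by
    have := congrArg (fun z : ℤ => (z : ZMod n)) hN
    simp only [Int.cast_add, Int.cast_sub, Int.cast_pow, Int.cast_mul] at this
    rw [ZMod.pow_card, ZMod.pow_card] at this
    push_cast at this ⊢
    rw [this]; ring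
  have hNne : ((N : ZMod n)) ≠ 0 := by
    rw [Ne, ZMod.intCast_zmod_eq_zero_iff_dvd]
    exact_mod_cast hndvd
  have h2mne : (2 * (m : ZMod n)) ≠ 0 := hZ ▸ hNne
  have hSZ : ((S : ZMod n)) = 1 := by
    have : (2 * (m : ZMod n)) * (S : ZMod n) = 2 * (m : ZMod n) * 1 := by
      have := congrArg (fun z : ℤ => (z : ZMod n)) hS
      push_cast at this
      rw [← this, hZ, mul_one]
    exact mul_left_cancel₀ h2mne this
  have : (n : ℤ) ∣ S - 1 := by
    have : ((S - 1 : ℤ) : ZMod n) = 0 := by push_cast [hSZ]; ring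
    exact_mod_cast (ZMod.intCast_zmod_eq_zero_iff_dvd _ _).mp this
  obtain ⟨t, ht⟩ := this
  exact ⟨t, by rw [hS]; linear_combination 2 * m * ht⟩
end

section
/- Let n be an odd natural number with n ≥ 3, and let m, h be integers with 0 < h < m. Set N = (m-h)^n + (m+h)^n. Then m divides N and 2*m^n < N < (2*m)^n (equivalently, the n-th root of N/2^n is less than m, which is less than the n-th root of N/2). -/
lemma up_aux (x y : ℤ) (hx : 0 < x) (hy : 0 < y) :
    ∀ n, 2 ≤ n → x ^ n + y ^ n < (x + y) ^ n := by
  intro n hn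
  induction n with
  | zero => omega
  | succ k ih =>
    rcases Nat.lt_or_ge k 2 with hk | hk
    · interval_cases k
      · omega
      · ring_nf; nlinarith
    · have h1 := ih hk
      have hxk : 0 < x ^ k := pow_pos hx k
      have hyk : 0 < y ^ k := pow_pos hy k
      have : (x + y) ^ (k + 1) = (x + y) * (x + y) ^ k := by ring
      nlinarith [mul_pos hx hyk, mul_pos hy hxk, mul_lt_mul_of_pos_left h1 (by linarith : (0:ℤ) < x + y), pow_succ x k, pow_succ y k]

lemma low_aux (m h : ℤ) (hh : 0 < h) (hhm : h < m) :
    ∀ n, 2 ≤ n → 2 * m ^ n < (m - h) ^ n + (m + h) ^ n := by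
  intro n hn
  induction n with
  | zero => omega
  | succ k ih =>
    rcases Nat.lt_or_ge k 2 with hk | hk
    · interval_cases k
      · omega
      · ring_nf; nlinarith
    · have h1 := ih hk
      have h2 : (m - h) ^ k < (m + h) ^ k :=
        pow_lt_pow_left₀ (by linarith) (by linarith) (by omega)
      have hm : 0 < m := lt_trans hh hhm
      have expand : (m - h) ^ (k + 1) + (m + h) ^ (k + 1)
          = m * ((m - h) ^ k + (m + h) ^ k) + h * ((m + h) ^ k - (m - h) ^ k) := by ring
      nlinarith [mul_lt_mul_of_pos_left h1 hm, mul_pos hh (sub_pos.mpr h2), pow_succ m k, pow_succ (m - h) k, pow_succ (m + h) k]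

theorem median_bounds (n : ℕ) (hodd : Odd n) (hn : 3 ≤ n)
    (m h N : ℤ) (hh : 0 < h) (hhm : h < m)
    (hN : N = (m - h) ^ n + (m + h) ^ n) :
    m ∣ N ∧ 2 * m ^ n < N ∧ N < (2 * m) ^ n := by
  refine ⟨?_, ?_, ?_⟩
  · have hd : (m - h) + (m + h) ∣ (m - h) ^ n + (m + h) ^ n :=
      Odd.add_dvd_pow_add_pow _ _ hodd
    have : (m - h) + (m + h) = 2 * m := by ring
    rw [this] at hd
    rw [hN]
    exact dvd_trans (dvd_mul_left m 2) hd
  · rw [hN]; exact low_aux m h hh hhm n (by omega)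
  · rw [hN]
    have := up_aux (m - h) (m + h) (by linarith) (by linarith) n (by omega)
    have e : (m - h) + (m + h) = 2 * m := by ring
    rwa [e] at this
end

section
/- Let n be an odd prime with n ≥ 3, let N be an even positive integer, and suppose there are k ≥ 2 pairwise distinct pairs (x_1,y_1), ..., (x_k,y_k) of positive integers with x_i < y_i and x_i^n + y_i^n = N for every i. Then, as real numbers, N ≥ 2 * (2*n / (2 - 2^(1/n)))^n * (k-1)^n. -/
/-!
Put `s = x + y`. For an odd prime `n`, Fermat's little theorem together with `x ^ n ≡ x [MOD 2]`
gives `s ≡ x ^ n + y ^ n = N [MOD 2n]`, and strict convexity of `t ↦ t ^ n` shows that a pair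
with `x ≤ y` is determined by its sum once `x ^ n + y ^ n` is fixed. So the `k` representations
have `k` distinct sums in one residue class mod `2n`, which therefore spread over an interval of
length at least `2n(k - 1)`. On the other hand every sum lies in `[N^(1/n), 2^(1 - 1/n) N^(1/n)]`,
because `x ^ n + y ^ n ≤ (x + y) ^ n ≤ 2 ^ (n - 1) (x ^ n + y ^ n)`. Comparing the two lengths
bounds `N^(1/n)` from below.
-/

open Finset Function

theorem pow_modEq_self_of_odd_prime {p : ℕ} (hp : p.Prime) (hodd : Odd p) (x : ℕ) :
    x ^ p ≡ x [MOD 2 * p] := by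
  have mod_two : x ^ p ≡ x [MOD 2] := by
    rcases Nat.mod_two_eq_zero_or_one x with h | h <;>
      simp [Nat.ModEq, Nat.pow_mod, h, hp.ne_zero]
  have mod_p : x ^ p ≡ x [MOD p] :=
    Int.natCast_modEq_iff.mp (by exact_mod_cast Int.ModEq.pow_prime_eq_self hp x)
  exact (Nat.modEq_and_modEq_iff_modEq_mul (Nat.coprime_two_left.mpr hodd)).mp ⟨mod_two, mod_p⟩

theorem pow_add_pow_lt_pow_add_pow {n a b c d : ℕ} (hn : 2 ≤ n) (hac : a < c) (hcd : c ≤ d)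
    (hsum : a + b = c + d) : c ^ n + d ^ n < a ^ n + b ^ n := by
  obtain ⟨e, he, rfl⟩ : ∃ e, 0 < e ∧ c = a + e := ⟨c - a, by omega, by omega⟩
  obtain rfl : b = d + e := by omega
  have expand : ∀ u, (u + e) ^ n =
      (∑ i ∈ range n, u ^ i * e ^ (n - i) * n.choose i) + u ^ n := fun u => by
    rw [add_pow, sum_range_succ]; simp
  have hlt : ∑ i ∈ range n, a ^ i * e ^ (n - i) * n.choose i <
      ∑ i ∈ range n, d ^ i * e ^ (n - i) * n.choose i := by
    refine sum_lt_sum (fun i _ => by gcongr; omega) ⟨1, mem_range.mpr (by omega), ?_⟩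
    simp only [pow_one, Nat.choose_one_right]
    gcongr
    omega
  rw [expand, expand]
  omega

theorem eq_of_add_eq_of_pow_add_pow_eq {n x₁ y₁ x₂ y₂ : ℕ} (hn : 2 ≤ n) (h₁ : x₁ ≤ y₁)
    (h₂ : x₂ ≤ y₂) (hsum : x₁ + y₁ = x₂ + y₂) (hpow : x₁ ^ n + y₁ ^ n = x₂ ^ n + y₂ ^ n) :
    (x₁, y₁) = (x₂, y₂) := by
  suffices x₁ = x₂ by ext <;> simp <;> omega
  rcases lt_trichotomy x₁ x₂ with h | h | h
  · exact absurd hpow (pow_add_pow_lt_pow_add_pow hn h h₂ hsum).ne'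
  · exact h
  · exact absurd hpow (pow_add_pow_lt_pow_add_pow hn h h₁ hsum.symm).ne

theorem exists_add_mul_le_of_modEq {k m : ℕ} (hk : 0 < k) {f : Fin k → ℕ} (hf : Injective f)
    (hmod : ∀ i j, f i ≡ f j [MOD m]) : ∃ i j, f i + m * (k - 1) ≤ f j := by
  obtain ⟨i₀, -, hmin⟩ := exists_min_image univ f ⟨⟨0, hk⟩, mem_univ _⟩
  set q : Fin k → ℕ := fun i => (f i - f i₀) / m
  have hq : ∀ i, f i = f i₀ + m * q i := fun i => by
    have hle := hmin i (mem_univ _)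
    rw [Nat.mul_div_cancel' ((Nat.modEq_iff_dvd' hle).mp (hmod i₀ i))]
    omega
  obtain ⟨j, hj⟩ : ∃ j, k - 1 ≤ q j := by
    by_contra! h
    have := card_le_card_of_injOn q (s := univ) (t := range (k - 1))
      (fun i _ => mem_range.mpr (h i)) (fun i _ j _ hij => hf (by rw [hq i, hq j, hij]))
    simp only [card_univ, Fintype.card_fin, card_range] at this
    omega
  exact ⟨i₀, j, by rw [hq j]; gcongr⟩

theorem two_mul_div_two_sub_root_two_pow_le {n : ℕ} (hn : 2 ≤ n) {N a b d : ℝ} (hN : 0 ≤ N)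
    (ha : 0 ≤ a) (hNa : N ≤ a ^ n) (hbN : b ^ n ≤ 2 ^ (n - 1) * N) (hd : 0 ≤ d) (habd : a + d ≤ b) :
    2 * (d / (2 - 2 ^ ((1 : ℝ) / n))) ^ n ≤ N := by
  have hn0 : n ≠ 0 := by omega
  set c : ℝ := 2 ^ ((1 : ℝ) / n)
  set t : ℝ := N ^ ((1 : ℝ) / n)
  have hc : c ^ n = 2 := by
    simpa [c, one_div] using Real.rpow_inv_natCast_pow (by norm_num : (0 : ℝ) ≤ 2) hn0
  have ht : t ^ n = N := by simpa [t, one_div] using Real.rpow_inv_natCast_pow hN hn0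
  have hc0 : 0 < c := by positivity
  have ht0 : 0 ≤ t := by positivity
  have hc2 : c < 2 := lt_of_pow_lt_pow_left₀ n zero_le_two
    (by rw [hc]; exact lt_self_pow₀ one_lt_two (by omega))
  have hta : t ≤ a := (pow_le_pow_iff_left₀ ht0 ha hn0).mp (ht ▸ hNa)
  have hcb : c * b ≤ 2 * t := by
    refine (pow_le_pow_iff_left₀ (by nlinarith) (by positivity) hn0).mp ?_
    rw [mul_pow, mul_pow, hc, ht]
    calc 2 * b ^ n ≤ 2 * (2 ^ (n - 1) * N) := by gcongr
      _ = 2 ^ n * N := by rw [← mul_assoc, ← pow_succ', Nat.sub_add_cancel (by omega)]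
  have hdt : c * d / (2 - c) ≤ t := by
    rw [div_le_iff₀ (by linarith)]
    nlinarith [mul_le_mul_of_nonneg_left hta hc0.le, mul_le_mul_of_nonneg_left habd hc0.le]
  calc 2 * (d / (2 - c)) ^ n = (c * d / (2 - c)) ^ n := by rw [mul_div_assoc, mul_pow, hc]
    _ ≤ t ^ n := by gcongr
    _ = N := ht

theorem taxicab_lower_bound_general (n : ℕ) (hp : n.Prime) (hodd : Odd n)
    (N : ℕ) (k : ℕ) (hk : 2 ≤ k) (x y : Fin k → ℕ)
    (hxy : ∀ i, x i < y i)
    (hrep : ∀ i, (x i) ^ n + (y i) ^ n = N)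
    (hdist : Function.Injective (fun i => (x i, y i))) :
    (N : ℝ) ≥ 2 * (2 * n / (2 - (2 : ℝ) ^ ((1 : ℝ) / n))) ^ n * ((k : ℝ) - 1) ^ n := by
  have hn : 2 ≤ n := hp.two_le
  have hs_inj : Injective fun i => x i + y i := fun i j hij =>
    hdist (eq_of_add_eq_of_pow_add_pow_eq hn (hxy i).le (hxy j).le hij
      ((hrep i).trans (hrep j).symm))
  have hs_mod : ∀ i, N ≡ x i + y i [MOD 2 * n] := fun i =>
    hrep i ▸ (pow_modEq_self_of_odd_prime hp hodd _).add (pow_modEq_self_of_odd_prime hp hodd _)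
  obtain ⟨i, j, hij⟩ := exists_add_mul_le_of_modEq (by omega) hs_inj
    fun i j => (hs_mod i).symm.trans (hs_mod j)
  have hlow : N ≤ (x i + y i) ^ n :=
    hrep i ▸ pow_add_pow_le (Nat.zero_le _) (Nat.zero_le _) hp.ne_zero
  have hhigh : (x j + y j) ^ n ≤ 2 ^ (n - 1) * N :=
    hrep j ▸ add_pow_le (Nat.zero_le _) (Nat.zero_le _) n
  have hgap : ((x i + y i : ℕ) : ℝ) + 2 * n * ((k : ℝ) - 1) ≤ (x j + y j : ℕ) := by
    have := (Nat.cast_le (α := ℝ)).mpr hij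
    push_cast [Nat.cast_sub (by omega : 1 ≤ k)] at this ⊢
    linarith
  have hbound := two_mul_div_two_sub_root_two_pow_le hn (N.cast_nonneg' (α := ℝ))
    (Nat.cast_nonneg' _)
    (by exact_mod_cast hlow) (by exact_mod_cast hhigh)
    (mul_nonneg (by positivity) (sub_nonneg.mpr (by exact_mod_cast (by omega : 1 ≤ k)))) hgap
  rwa [mul_div_right_comm, mul_pow, ← mul_assoc] at hbound

theorem taxicab_lower_bound (n : ℕ) (hp : n.Prime) (hodd : Odd n) (hn : 3 ≤ n)
    (N : ℕ) (hNpos : 0 < N) (hNeven : 2 ∣ N)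
    (k : ℕ) (hk : 2 ≤ k) (x y : Fin k → ℕ)
    (hxpos : ∀ i, 0 < x i) (hxy : ∀ i, x i < y i)
    (hrep : ∀ i, (x i) ^ n + (y i) ^ n = N)
    (hdist : Function.Injective (fun i => (x i, y i))) :
    (N : ℝ) ≥ 2 * (2 * n / (2 - (2 : ℝ) ^ ((1 : ℝ) / n))) ^ n * ((k : ℝ) - 1) ^ n :=
  taxicab_lower_bound_general n hp hodd N k hk x y hxy hrep hdist
end

section
/- Let m and h be integers with gcd(m,h) = 1 and m ≢ h (mod 2), and set N = (m-h)^3 + (m+h)^3. Then m ≡ N/2 (mod 12), i.e., 12 divides N/2 - m. -/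
theorem cubic_median_mod_twelve (m h N : ℤ)
    (hgcd : Int.gcd m h = 1) (hpar : ¬ m ≡ h [ZMOD 2])
    (hN : N = (m - h) ^ 3 + (m + h) ^ 3) :
    (12 : ℤ) ∣ N / 2 - m := by
  have hx : N / 2 - m = m ^ 3 + 3 * m * h ^ 2 - m := by
    have h2 : N = 2 * (m ^ 3 + 3 * m * h ^ 2) := by rw [hN]; ring
    rw [h2, Int.mul_ediv_cancel_left _ two_ne_zero]
  rw [hx]
  have hpar' : ¬ (m % 2 = h % 2) := hpar
  rcases Int.even_or_odd m with ⟨k, hk⟩ | ⟨k, hk⟩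
  · -- m even, h odd
    obtain ⟨a, ha⟩ : ∃ a, h = 2 * a + 1 := ⟨h / 2, by omega⟩
    have h3 : (3 : ℤ) ∣ k * (2 * k ^ 2 + 1) := by
      have hz : ((k * (2 * k ^ 2 + 1) : ℤ) : ZMod 3) = 0 := by
        push_cast
        have hall : ∀ x : ZMod 3, x * (2 * x ^ 2 + 1) = 0 := by decide
        exact hall _
      exact (ZMod.intCast_zmod_eq_zero_iff_dvd _ 3).mp hz
    obtain ⟨t, ht⟩ := h3
    refine ⟨t + 2 * k * (a ^ 2 + a), ?_⟩
    subst hk ha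
    linear_combination 4 * ht
  · -- m odd, h even
    obtain ⟨a, ha⟩ : ∃ a, h = 2 * a := ⟨h / 2, by omega⟩
    have h3 : (3 : ℤ) ∣ k * (k + 1) * (2 * k + 1) := by
      have hz : ((k * (k + 1) * (2 * k + 1) : ℤ) : ZMod 3) = 0 := by
        push_cast
        have hall : ∀ x : ZMod 3, x * (x + 1) * (2 * x + 1) = 0 := by decide
        exact hall _
      exact (ZMod.intCast_zmod_eq_zero_iff_dvd _ 3).mp hz
    obtain ⟨t, ht⟩ := h3
    refine ⟨t + m * a ^ 2, ?_⟩
    subst hk ha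
    linear_combination 4 * ht
end

section
/- Let N be an integer. If there exist integers t, s, r with r ≠ 0, (t,s) ≠ (0,0), and 2*t^3 - 18*t*s^2 = N*r^3, then N is a sum of two rational cubes: there exist rational numbers x and y with x^3 + y^3 = N. -/
theorem decomposable_of_solvable (N : ℤ)
    (hsol : ∃ t s r : ℤ, r ≠ 0 ∧ (t, s) ≠ (0, 0) ∧
      2 * t ^ 3 - 18 * t * s ^ 2 = N * r ^ 3) :
    ∃ x y : ℚ, x ^ 3 + y ^ 3 = (N : ℚ) := by
  obtain ⟨t, s, r, hr, hts, heq⟩ := hsol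
  have hrQ : (r : ℚ) ≠ 0 := Int.cast_ne_zero.mpr hr
  have heqQ : 2 * (t : ℚ) ^ 3 - 18 * t * s ^ 2 = N * r ^ 3 := by
    exact_mod_cast congrArg (Int.cast : ℤ → ℚ) heq
  have hd : (t : ℚ) ^ 2 + 3 * (s : ℚ) ^ 2 ≠ 0 := by
    intro h
    have ht : (t : ℚ) = 0 ∧ (s : ℚ) = 0 := by
      constructor <;> nlinarith [sq_nonneg (t : ℚ), sq_nonneg (s : ℚ)]
    exact hts (by
      have h1 : t = 0 := by exact_mod_cast ht.1
      have h2 : s = 0 := by exact_mod_cast ht.2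
      simp [h1, h2])
  refine ⟨((t : ℚ) ^ 3 + 3 * t ^ 2 * s - 9 * t * s ^ 2 - 3 * s ^ 3) /
      (r * (t ^ 2 + 3 * s ^ 2)),
    ((t : ℚ) ^ 3 - 3 * t ^ 2 * s - 9 * t * s ^ 2 + 3 * s ^ 3) /
      (r * (t ^ 2 + 3 * s ^ 2)), ?_⟩
  have hden : (r : ℚ) * ((t : ℚ) ^ 2 + 3 * s ^ 2) ≠ 0 := mul_ne_zero hrQ hd
  field_simp
  ring_nf
  linear_combination (((t : ℚ) ^ 2 + 3 * s ^ 2) ^ 3) * heqQ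
end

section
/- For all rational numbers p and q with p ≠ 0, q ≠ 0, and p^6 + p^3*q^3 + q^6 ≠ 0, ((p^9 + 6*p^6*q^3 + 3*p^3*q^6 - q^9)/(3*p*q*(p^6 + p^3*q^3 + q^6)))^3 + ((q^9 + 6*q^6*p^3 + 3*q^3*p^6 - p^9)/(3*p*q*(p^6 + p^3*q^3 + q^6)))^3 = p^3 + q^3. -/
theorem cube_add_cube_mul_cube_eq {R : Type*} [CommRing R] (p q : R) :
    (p ^ 9 + 6 * p ^ 6 * q ^ 3 + 3 * p ^ 3 * q ^ 6 - q ^ 9) ^ 3 +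
        (q ^ 9 + 6 * q ^ 6 * p ^ 3 + 3 * q ^ 3 * p ^ 6 - p ^ 9) ^ 3 =
      (p ^ 3 + q ^ 3) * (3 * p * q * (p ^ 6 + p ^ 3 * q ^ 3 + q ^ 6)) ^ 3 := by
  ring

theorem sum_two_cubes_parametrization (p q : ℚ) (hp : p ≠ 0) (hq : q ≠ 0)
    (hne : p ^ 6 + p ^ 3 * q ^ 3 + q ^ 6 ≠ 0) :
    ((p ^ 9 + 6 * p ^ 6 * q ^ 3 + 3 * p ^ 3 * q ^ 6 - q ^ 9) /
        (3 * p * q * (p ^ 6 + p ^ 3 * q ^ 3 + q ^ 6))) ^ 3 +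
      ((q ^ 9 + 6 * q ^ 6 * p ^ 3 + 3 * q ^ 3 * p ^ 6 - p ^ 9) /
        (3 * p * q * (p ^ 6 + p ^ 3 * q ^ 3 + q ^ 6))) ^ 3 =
    p ^ 3 + q ^ 3 := by
  have hden : 3 * p * q * (p ^ 6 + p ^ 3 * q ^ 3 + q ^ 6) ≠ 0 :=
    mul_ne_zero (mul_ne_zero (mul_ne_zero three_ne_zero hp) hq) hne
  rw [div_pow, div_pow, ← add_div, div_eq_iff (pow_ne_zero 3 hden), cube_add_cube_mul_cube_eq]
end

section
/- For all integers t and s, in the ring of Gaussian integers ℤ[i] the following two equalities hold: ((t^2+s^2) - (t^2-2*t*s-s^2)*i)^5 + ((t^2+s^2) + (t^2-2*t*s-s^2)*i)^5 = ((t^2+s^2) - (t^2+2*t*s-s^2)*i)^5 + ((t^2+s^2) + (t^2+2*t*s-s^2)*i)^5, and both sides equal -8*(t^2+s^2)*(t^4-2*t^3*s-6*t^2*s^2+2*t*s^3+s^4)*(t^4+2*t^3*s-6*t^2*s^2-2*t*s^3+s^4). -/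
open GaussianInt in
lemma gaussian_quintic_key (a b : ℤ) :
    ((a : GaussianInt) - (b : GaussianInt) * Zsqrtd.sqrtd) ^ 5 +
      ((a : GaussianInt) + (b : GaussianInt) * Zsqrtd.sqrtd) ^ 5 =
    ((2*a^5 - 20*a^3*b^2 + 10*a*b^4 : ℤ) : GaussianInt) := by
  apply GaussianInt.toComplex_injective
  have hd : toComplex (Zsqrtd.sqrtd : GaussianInt) = Complex.I := by
    simp [GaussianInt.toComplex_def]
  have hc : ∀ n : ℤ, toComplex (n : GaussianInt) = (n : ℂ) := fun n => map_intCast toComplex n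
  simp only [map_add, map_sub, map_mul, map_pow, hd, hc]
  push_cast
  linear_combination (20*(a:ℂ)^3*(b:ℂ)^2 + 10*(a:ℂ)*(b:ℂ)^4*(Complex.I^2 - 1)) * Complex.I_sq

open GaussianInt in
theorem gaussian_quintic_identity (t s : ℤ) :
    (((t ^ 2 + s ^ 2 : ℤ) : GaussianInt) -
        ((t ^ 2 - 2 * t * s - s ^ 2 : ℤ) : GaussianInt) * Zsqrtd.sqrtd) ^ 5 +
      (((t ^ 2 + s ^ 2 : ℤ) : GaussianInt) +
        ((t ^ 2 - 2 * t * s - s ^ 2 : ℤ) : GaussianInt) * Zsqrtd.sqrtd) ^ 5 =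
    (((t ^ 2 + s ^ 2 : ℤ) : GaussianInt) -
        ((t ^ 2 + 2 * t * s - s ^ 2 : ℤ) : GaussianInt) * Zsqrtd.sqrtd) ^ 5 +
      (((t ^ 2 + s ^ 2 : ℤ) : GaussianInt) +
        ((t ^ 2 + 2 * t * s - s ^ 2 : ℤ) : GaussianInt) * Zsqrtd.sqrtd) ^ 5 ∧
    (((t ^ 2 + s ^ 2 : ℤ) : GaussianInt) -
        ((t ^ 2 - 2 * t * s - s ^ 2 : ℤ) : GaussianInt) * Zsqrtd.sqrtd) ^ 5 +
      (((t ^ 2 + s ^ 2 : ℤ) : GaussianInt) +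
        ((t ^ 2 - 2 * t * s - s ^ 2 : ℤ) : GaussianInt) * Zsqrtd.sqrtd) ^ 5 =
    ((-8 * (t ^ 2 + s ^ 2) *
        (t ^ 4 - 2 * t ^ 3 * s - 6 * t ^ 2 * s ^ 2 + 2 * t * s ^ 3 + s ^ 4) *
        (t ^ 4 + 2 * t ^ 3 * s - 6 * t ^ 2 * s ^ 2 - 2 * t * s ^ 3 + s ^ 4) : ℤ) :
      GaussianInt) := by
  rw [gaussian_quintic_key, gaussian_quintic_key]
  exact ⟨congrArg _ (by ring), congrArg _ (by ring)⟩
end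

section
/- The number N = 2576088109257300012819637660033432990289770725881505682307757452553496715044742867424072384 can be written as a sum of two positive cubes in at least 14 different ways: there exist 14 pairwise distinct pairs (x_i, y_i) of positive integers with x_i < y_i and x_i^3 + y_i^3 = N. (For instance x_1 = 27608224788038852868255119502, y_1 = 1370836696688133916355710858626, and x_14 = 1068015318841325114648936069548, y_14 = 1107347305019827800007078790648.) -/
theorem taxicab_fourteen :
    ∃ x y : Fin 14 → ℕ,
      (∀ i, 0 < x i) ∧ (∀ i, x i < y i) ∧
      (∀ i, (x i) ^ 3 + (y i) ^ 3 =
        2576088109257300012819637660033432990289770725881505682307757452553496715044742867424072384) ∧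
      Function.Injective (fun i => (x i, y i)) := by
  refine ⟨![27608224788038852868255119502, 63143709142093134158805320598, 63784494973840028059906426444, 108438232009378539796335869516, 145314151341790388087645525283, 215768573262722097026704765288, 404015076354122094025926361951, 413827355989433962261652107596, 617989830682279948575932296880, 651799806248584830314835460558, 769119363633661596702217886828, 829557342581395696803537855216, 867374163775198573472439650462, 1068015318841325114648936069548], ![1370836696688133916355710858626, 1370795770338163183869261487098, 1370794396840916418411211340960, 1370614213077319303624382243392, 1370295925240911309866010890013, 1369056264981068276864608774508, 1359041543344122738287510692577, 1358152570104992661901882252272, 1327627770274178602420131034444, 1319848377971621677029965852738, 1284857783045084620502596441768, 1261015277588639058077305078092, 1243654157179278791534438927986, 1107347305019827800007078790648], ?_, ?_, ?_, ?_⟩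
  · decide
  · decide
  · decide
  · decide
end
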